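/- arXiv:2408.02588 — 7 statements merged into one kernel-verified Lean document; each statement's English description precedes it below -/
import Mathlib

section
/- Let H be the 3-uniform hypergraph on vertex set V = V1 ∪ V2 ∪ V3 (disjoint parts) whose edges are the triples uvw with u ∈ Vi, v ∈ Vj, w ∈ Vk and i + j + k ≡ 1 (mod 3). Then every tight cycle C_ℓ contained in H has length ℓ divisible by 3. -/
/-- In the hypergraph whose vertices are partitioned into three parts
(indexed by `ZMod 3` via the coloring `c`) and whose edges are the triples with
color-sum ≡ 1 (mod 3), every tight cycle `C_ℓ` contained in it has `3 ∣ ℓ`.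
A tight cycle contained in `H` is given by an injective map `f : ZMod ℓ → V`
such that every consecutive triple is an edge, i.e. has color-sum 1. -/
theorem stmt0 {V : Type*} (c : V → ZMod 3) (ℓ : ℕ) (hℓ : 3 ≤ ℓ)
    (f : ZMod ℓ → V) (hinj : Function.Injective f)
    (hedge : ∀ i : ZMod ℓ, c (f i) + c (f (i + 1)) + c (f (i + 2)) = 1) :
    3 ∣ ℓ := by
  by_contra h3
  haveI : NeZero ℓ := ⟨by omega⟩
  set g : ZMod ℓ → ZMod 3 := fun i => c (f i) with hg
  have hper : ∀ i : ZMod ℓ, g (i + 3) = g i := by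
    intro i
    have h1 := hedge i
    have h2 := hedge (i + 1)
    have e1 : i + 1 + 1 = i + 2 := by ring
    have e2 : i + 1 + 2 = i + 3 := by ring
    rw [e1, e2] at h2
    have : g (i + 1) + g (i + 2) + g (i + 3) = g i + g (i + 1) + g (i + 2) :=
      h2.trans h1.symm
    linear_combination this
  have hpern : ∀ (n : ℕ) (i : ZMod ℓ), g (i + 3 * (n : ZMod ℓ)) = g i := by
    intro n
    induction n with
    | zero => simp
    | succ m ih =>
      intro i
      have e : i + 3 * (((m : ℕ) : ZMod ℓ) + 1) = (i + 3) + 3 * (m : ZMod ℓ) := by ring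
      push_cast
      rw [e, ih, hper]
  -- 3 is invertible mod ℓ
  have hcop : Nat.Coprime 3 ℓ :=
    (Nat.Prime.coprime_iff_not_dvd Nat.prime_three).mpr h3
  have hunit : IsUnit (3 : ZMod ℓ) := by
    have := (ZMod.isUnit_iff_coprime 3 ℓ).mpr hcop
    simpa using this
  obtain ⟨u, hu⟩ := hunit
  have hk : (3 : ZMod ℓ) * (u⁻¹ : (ZMod ℓ)ˣ) = 1 := by
    rw [← hu]; exact_mod_cast u.mul_inv
  set k : ZMod ℓ := ((u⁻¹ : (ZMod ℓ)ˣ) : ZMod ℓ) with hkdef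
  have hstep : ∀ i : ZMod ℓ, g (i + 1) = g i := by
    intro i
    have := hpern k.val i
    rwa [ZMod.natCast_val, ZMod.cast_id, hk] at this
  have h0 := hedge 0
  have e1 : g 1 = g 0 := by simpa using hstep 0
  have e2 : g 2 = g 0 := by
    have := hstep 1
    simp only [show (1 : ZMod ℓ) + 1 = 2 by ring] at this
    rw [this, e1]
  have hfin : g 0 + g 0 + g 0 = 1 := by
    have : g 0 + g 1 + g 2 = 1 := by simpa using h0
    rwa [e1, e2] at this
  revert hfin
  generalize g 0 = x
  revert x
  decide
end

section
/- Suppose a 3-uniform hypergraph H contains two copies K, K' of K₄⁻ with V(K) = {u, v, x, y}, V(K') = {u, v, a, b}, where v is the apex of K and a is the apex of K' (so neither u nor v is the apex of K'). Then H contains a homomorphic image of the tight cycle C₁₀, given by the cyclic vertex sequence (v, u, a, b, v, a, u, v, x, y). -/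
lemma card3_le' {V : Type*} [DecidableEq V] (p q r : V) : ({p,q,r} : Finset V).card ≤ 3 :=
  (Finset.card_insert_le _ _).trans (Nat.succ_le_succ
    ((Finset.card_insert_le _ _).trans (Nat.succ_le_succ (Finset.card_singleton r).le)))

lemma distinct4' {V : Type*} [DecidableEq V] {p q r s : V}
    (h : ({p,q,r,s} : Finset V).card = 4) :
    p ≠ q ∧ p ≠ r ∧ p ≠ s ∧ q ≠ r ∧ q ≠ s ∧ r ≠ s := by
  refine ⟨?_, ?_, ?_, ?_, ?_, ?_⟩ <;> intro he
  · have he2 : ({p,q,r,s} : Finset V) = {q,r,s} := by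
      ext z; simp only [Finset.mem_insert, Finset.mem_singleton]
      subst he; tauto
    rw [he2] at h; have := card3_le' q r s; omega
  · have he2 : ({p,q,r,s} : Finset V) = {q,r,s} := by
      ext z; simp only [Finset.mem_insert, Finset.mem_singleton]
      subst he; tauto
    rw [he2] at h; have := card3_le' q r s; omega
  · have he2 : ({p,q,r,s} : Finset V) = {q,r,s} := by
      ext z; simp only [Finset.mem_insert, Finset.mem_singleton]
      subst he; tauto
    rw [he2] at h; have := card3_le' q r s; omega
  · have he2 : ({p,q,r,s} : Finset V) = {p,q,s} := by
      ext z; simp only [Finset.mem_insert, Finset.mem_singleton]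
      subst he; tauto
    rw [he2] at h; have := card3_le' p q s; omega
  · have he2 : ({p,q,r,s} : Finset V) = {p,q,r} := by
      ext z; simp only [Finset.mem_insert, Finset.mem_singleton]
      subst he; tauto
    rw [he2] at h; have := card3_le' p q r; omega
  · have he2 : ({p,q,r,s} : Finset V) = {p,q,r} := by
      ext z; simp only [Finset.mem_insert, Finset.mem_singleton]
      subst he; tauto
    rw [he2] at h; have := card3_le' p q r; omega

lemma perm3 {V : Type*} [DecidableEq V] {E : Set (Finset V)} {p q r p' q' r' : V}
    (h : ({p,q,r} : Finset V) ∈ E) (he : ({p',q',r'} : Finset V) = {p,q,r}) :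
    ({p',q',r'} : Finset V) ∈ E := he ▸ h

def IsK4m {V : Type*} [DecidableEq V] (E : Set (Finset V)) (s : Finset V) (a : V) :
    Prop :=
  s.card = 4 ∧ a ∈ s ∧ ∀ t ⊆ s, t.card = 3 → a ∈ t → t ∈ E

/-- If `H` contains copies `K`, `K'` of `K₄⁻` with `V(K) = {u,v,x,y}`,
apex `v`, and `V(K') = {u,v,a,b}`, apex `a`, then `H` contains a homomorphic image of
the tight cycle `C₁₀`, given by the cyclic vertex sequence `(v,u,a,b,v,a,u,v,x,y)`:
every three cyclically consecutive entries form an edge of `H`. -/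
theorem stmt9 {V : Type*} [DecidableEq V] (E : Set (Finset V)) (u v x y a b : V)
    (hK : IsK4m E ({u, v, x, y} : Finset V) v)
    (hK' : IsK4m E ({u, v, a, b} : Finset V) a) :
    ∃ w : Fin 10 → V, w = ![v, u, a, b, v, a, u, v, x, y] ∧
      ∀ i : Fin 10, ({w i, w (i + 1), w (i + 2)} : Finset V) ∈ E := by
  obtain ⟨huv, hux, huy, hvx, hvy, hxy⟩ := distinct4' hK.1
  obtain ⟨_, hua, hub, hva, hvb, hab⟩ := distinct4' hK'.1
  have card3 : ∀ {p q r : V}, p ≠ q → p ≠ r → q ≠ r → ({p,q,r} : Finset V).card = 3 := by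
    intro p q r h1 h2 h3
    rw [Finset.card_eq_three]
    exact ⟨p, q, r, h1, h2, h3, rfl⟩
  have euvx : ({u,v,x} : Finset V) ∈ E := by
    refine hK.2.2 _ ?_ (card3 huv hux hvx) (by simp)
    intro z hz; simp only [Finset.mem_insert, Finset.mem_singleton] at hz ⊢; tauto
  have euvy : ({u,v,y} : Finset V) ∈ E := by
    refine hK.2.2 _ ?_ (card3 huv huy hvy) (by simp)
    intro z hz; simp only [Finset.mem_insert, Finset.mem_singleton] at hz ⊢; tauto
  have evxy : ({v,x,y} : Finset V) ∈ E := by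
    refine hK.2.2 _ ?_ (card3 hvx hvy hxy) (by simp)
    intro z hz; simp only [Finset.mem_insert, Finset.mem_singleton] at hz ⊢; tauto
  have euva : ({u,v,a} : Finset V) ∈ E := by
    refine hK'.2.2 _ ?_ (card3 huv hua hva) (by simp)
    intro z hz; simp only [Finset.mem_insert, Finset.mem_singleton] at hz ⊢; tauto
  have euab : ({u,a,b} : Finset V) ∈ E := by
    refine hK'.2.2 _ ?_ (card3 hua hub hab) (by simp)
    intro z hz; simp only [Finset.mem_insert, Finset.mem_singleton] at hz ⊢; tauto
  have evab : ({v,a,b} : Finset V) ∈ E := by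
    refine hK'.2.2 _ ?_ (card3 hva hvb hab) (by simp)
    intro z hz; simp only [Finset.mem_insert, Finset.mem_singleton] at hz ⊢; tauto
  refine ⟨_, rfl, ?_⟩
  intro i
  fin_cases i
  · exact perm3 euva (by ext z; simp only [Finset.mem_insert, Finset.mem_singleton]; tauto)
  · exact perm3 euab (by ext z; simp only [Finset.mem_insert, Finset.mem_singleton]; tauto)
  · exact perm3 evab (by ext z; simp only [Finset.mem_insert, Finset.mem_singleton]; tauto)
  · exact perm3 evab (by ext z; simp only [Finset.mem_insert, Finset.mem_singleton]; tauto)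
  · exact perm3 euva (by ext z; simp only [Finset.mem_insert, Finset.mem_singleton]; tauto)
  · exact perm3 euva (by ext z; simp only [Finset.mem_insert, Finset.mem_singleton]; tauto)
  · exact perm3 euvx (by ext z; simp only [Finset.mem_insert, Finset.mem_singleton]; tauto)
  · exact perm3 evxy (by ext z; simp only [Finset.mem_insert, Finset.mem_singleton]; tauto)
  · exact perm3 evxy (by ext z; simp only [Finset.mem_insert, Finset.mem_singleton]; tauto)
  · exact perm3 euvy (by ext z; simp only [Finset.mem_insert, Finset.mem_singleton]; tauto)
end

section
/- Suppose a 3-uniform hypergraph H contains two copies K, K' of K₄⁻ with V(K) = {a, x, b, c}, apex a, and V(K') = {a, x, y, z}, apex x. Then H contains a homomorphic image of C₁₀, given by the cyclic sequence (x, a, y, x, z, a, x, b, a, c). -/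
lemma card_le3 {V : Type*} [DecidableEq V] (u v w : V) :
    ({u, v, w} : Finset V).card ≤ 3 := by
  have h1 := Finset.card_insert_le u ({v, w} : Finset V)
  have h2 := Finset.card_insert_le v ({w} : Finset V)
  simp at h2
  omega

lemma card4_ne {V : Type*} [DecidableEq V] {p q r s : V}
    (h : ({p, q, r, s} : Finset V).card = 4) :
    p ≠ q ∧ p ≠ r ∧ p ≠ s ∧ q ≠ r ∧ q ≠ s ∧ r ≠ s := by
  refine ⟨?_, ?_, ?_, ?_, ?_, ?_⟩ <;> rintro rfl
  · have hs : ({p, p, r, s} : Finset V) ⊆ {p, r, s} := by intro t ht; simp at ht ⊢; tauto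
    have := (Finset.card_le_card hs).trans (card_le3 p r s); omega
  · have hs : ({p, q, p, s} : Finset V) ⊆ {p, q, s} := by intro t ht; simp at ht ⊢; tauto
    have := (Finset.card_le_card hs).trans (card_le3 p q s); omega
  · have hs : ({p, q, r, p} : Finset V) ⊆ {p, q, r} := by intro t ht; simp at ht ⊢; tauto
    have := (Finset.card_le_card hs).trans (card_le3 p q r); omega
  · have hs : ({p, q, q, s} : Finset V) ⊆ {p, q, s} := by intro t ht; simp at ht ⊢; tauto
    have := (Finset.card_le_card hs).trans (card_le3 p q s); omega
  · have hs : ({p, q, r, q} : Finset V) ⊆ {p, q, r} := by intro t ht; simp at ht ⊢; tauto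
    have := (Finset.card_le_card hs).trans (card_le3 p q r); omega
  · have hs : ({p, q, r, r} : Finset V) ⊆ {p, q, r} := by intro t ht; simp at ht ⊢; tauto
    have := (Finset.card_le_card hs).trans (card_le3 p q r); omega

lemma card3 {V : Type*} [DecidableEq V] {u v w : V} (h1 : u ≠ v) (h2 : u ≠ w) (h3 : v ≠ w) :
    ({u, v, w} : Finset V).card = 3 := by
  rw [Finset.card_insert_of_notMem (by simp [h1, h2]),
    Finset.card_insert_of_notMem (by simp [h3]), Finset.card_singleton]

/-- If `H` contains copies `K`, `K'` of `K₄⁻` with `V(K) = {a,x,b,c}`,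
apex `a`, and `V(K') = {a,x,y,z}`, apex `x`, then `H` contains a homomorphic image of
`C₁₀` given by the cyclic sequence `(x,a,y,x,z,a,x,b,a,c)`. -/
theorem stmt11 {V : Type*} [DecidableEq V] (E : Set (Finset V)) (a x b c y z : V)
    (hK : IsK4m E ({a, x, b, c} : Finset V) a)
    (hK' : IsK4m E ({a, x, y, z} : Finset V) x) :
    ∃ w : Fin 10 → V, w = ![x, a, y, x, z, a, x, b, a, c] ∧
      ∀ i : Fin 10, ({w i, w (i + 1), w (i + 2)} : Finset V) ∈ E := by
  obtain ⟨hax, hab, hac, hxb, hxc, hbc⟩ := card4_ne hK.1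
  obtain ⟨_, hay, haz, hxy, hxz, hyz⟩ := card4_ne hK'.1
  have e1 : ({a, x, y} : Finset V) ∈ E :=
    hK'.2.2 _ (by intro t ht; simp at ht ⊢; tauto) (card3 hax hay hxy) (by simp)
  have e2 : ({a, x, z} : Finset V) ∈ E :=
    hK'.2.2 _ (by intro t ht; simp at ht ⊢; tauto) (card3 hax haz hxz) (by simp)
  have e3 : ({x, y, z} : Finset V) ∈ E :=
    hK'.2.2 _ (by intro t ht; simp at ht ⊢; tauto) (card3 hxy hxz hyz) (by simp)
  have e4 : ({a, x, b} : Finset V) ∈ E :=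
    hK.2.2 _ (by intro t ht; simp at ht ⊢; tauto) (card3 hax hab hxb) (by simp)
  have e5 : ({a, x, c} : Finset V) ∈ E :=
    hK.2.2 _ (by intro t ht; simp at ht ⊢; tauto) (card3 hax hac hxc) (by simp)
  have e6 : ({a, b, c} : Finset V) ∈ E :=
    hK.2.2 _ (by intro t ht; simp at ht ⊢; tauto) (card3 hab hac hbc) (by simp)
  refine ⟨![x, a, y, x, z, a, x, b, a, c], rfl, ?_⟩
  intro i
  fin_cases i <;>
    simp only [Fin.isValue, Matrix.cons_val_zero, Matrix.cons_val_one, Matrix.head_cons,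
      Fin.mk_zero, Fin.mk_one] <;>
    norm_num [Matrix.cons_val_succ]
  · exact Set.mem_of_eq_of_mem (by ext t; simp; tauto) e1
  · exact Set.mem_of_eq_of_mem (by ext t; simp; tauto) e1
  · exact Set.mem_of_eq_of_mem (by ext t; simp; tauto) e3
  · exact Set.mem_of_eq_of_mem (by ext t; simp; tauto) e2
  · exact Set.mem_of_eq_of_mem (by ext t; simp; tauto) e2
  · exact Set.mem_of_eq_of_mem (by ext t; simp) e4
  · exact Set.mem_of_eq_of_mem (by ext t; simp; tauto) e4
  · exact Set.mem_of_eq_of_mem (by ext t; simp; tauto) e6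
  · exact Set.mem_of_eq_of_mem (by ext t; simp; tauto) e5
  · exact Set.mem_of_eq_of_mem (by ext t; simp; tauto) e5
end

section
/- Let H be a C₁₀-free (no homomorphic image of the tight 10-cycle) 3-uniform hypergraph on n vertices with δ₂(H) ≥ (1/3 + ε)n, n sufficiently large. Then every pair of distinct vertices of H is an apex pair or a base pair, but not both. -/
/-- `{u,v}` is an apex pair: some copy of `K₄⁻` contains `u` and `v` with `u` or `v`
as its apex. -/
def ApexPair {V : Type*} [DecidableEq V] (E : Set (Finset V)) (u v : V) : Prop :=
  ∃ s : Finset V, u ∈ s ∧ v ∈ s ∧ (IsK4m E s u ∨ IsK4m E s v)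

/-- `{u,v}` is a base pair: some copy of `K₄⁻` contains `u` and `v` with neither as
its apex. -/
def BasePair {V : Type*} [DecidableEq V] (E : Set (Finset V)) (u v : V) : Prop :=
  ∃ (s : Finset V) (a : V), u ∈ s ∧ v ∈ s ∧ a ≠ u ∧ a ≠ v ∧ IsK4m E s a

section Aux

variable {V : Type*} [DecidableEq V]

lemma triple_card {x y z : V} (hxy : x ≠ y) (hxz : x ≠ z) (hyz : y ≠ z) :
    ({x, y, z} : Finset V).card = 3 := by
  rw [Finset.card_insert_of_notMem (by simp [hxy, hxz]),
    Finset.card_insert_of_notMem (by simp [hyz]), Finset.card_singleton]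

lemma perm_mem {E : Set (Finset V)} {x y z : V} (h : ({x, y, z} : Finset V) ∈ E) :
    ({y, x, z} : Finset V) ∈ E := by
  rwa [show ({y, x, z} : Finset V) = {x, y, z} from by ext w; simp; tauto]

lemma rot_mem {E : Set (Finset V)} {x y z : V} (h : ({x, y, z} : Finset V) ∈ E) :
    ({z, x, y} : Finset V) ∈ E := by
  rwa [show ({z, x, y} : Finset V) = {x, y, z} from by ext w; simp; tauto]

lemma perm23_mem {E : Set (Finset V)} {x y z : V} (h : ({x, y, z} : Finset V) ∈ E) :
    ({x, z, y} : Finset V) ∈ E := by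
  rwa [show ({x, z, y} : Finset V) = {x, y, z} from by ext w; simp; tauto]

lemma ne_of_edge {E : Set (Finset V)} (h3 : ∀ e ∈ E, e.card = 3) {u v w : V}
    (huv : u ≠ v) (h : ({u, v, w} : Finset V) ∈ E) : w ≠ u ∧ w ≠ v := by
  have hc := h3 _ h
  constructor
  · intro hwu
    have he : ({u, v, w} : Finset V) = ({u, v} : Finset V) := by
      ext x; simp [hwu]; try tauto
    rw [he, Finset.card_pair huv] at hc
    omega
  · intro hwv
    have he : ({u, v, w} : Finset V) = ({u, v} : Finset V) := by
      ext x; simp [hwv]; try tauto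
    rw [he, Finset.card_pair huv] at hc
    omega

lemma isK4m_mk (E : Set (Finset V)) (a x y z : V)
    (hax : a ≠ x) (hay : a ≠ y) (haz : a ≠ z) (hxy : x ≠ y) (hxz : x ≠ z) (hyz : y ≠ z)
    (e1 : ({a, x, y} : Finset V) ∈ E) (e2 : ({a, x, z} : Finset V) ∈ E)
    (e3 : ({a, y, z} : Finset V) ∈ E) : IsK4m E {a, x, y, z} a := by
  have hs4 : ({a, x, y, z} : Finset V).card = 4 := by
    rw [Finset.card_insert_of_notMem (by simp [hax, hay, haz]), triple_card hxy hxz hyz]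
  refine ⟨hs4, by simp, fun t hts hc hat => ?_⟩
  have h1 : (({a, x, y, z} : Finset V) \ t).card = 1 := by
    rw [Finset.card_sdiff_of_subset hts, hs4, hc]
  obtain ⟨e, he⟩ := Finset.card_eq_one.mp h1
  have hte : t = ({a, x, y, z} : Finset V) \ {e} := by
    rw [← he, Finset.sdiff_sdiff_self_left, Finset.inter_eq_right.mpr hts]
  have heS : e ∈ ({a, x, y, z} : Finset V) ∧ e ∉ t := by
    have : e ∈ ({a, x, y, z} : Finset V) \ t := he ▸ Finset.mem_singleton_self e
    exact ⟨(Finset.mem_sdiff.mp this).1, (Finset.mem_sdiff.mp this).2⟩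
  have hea : e ≠ a := fun h => heS.2 (h ▸ hat)
  have : e = x ∨ e = y ∨ e = z := by
    have := heS.1; simp at this; tauto
  rcases this with rfl | rfl | rfl
  · have : t = ({a, y, z} : Finset V) := by
      rw [hte]; ext w; simp
      constructor
      · rintro ⟨h | h | h | h, hne⟩ <;> tauto
      · rintro (rfl | rfl | rfl) <;> exact ⟨by tauto, by intro h; subst h; tauto⟩
    rw [this]; exact e3
  · have : t = ({a, x, z} : Finset V) := by
      rw [hte]; ext w; simp
      constructor
      · rintro ⟨h | h | h | h, hne⟩ <;> tauto
      · rintro (rfl | rfl | rfl) <;> exact ⟨by tauto, by intro h; subst h; tauto⟩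
    rw [this]; exact e2
  · have : t = ({a, x, y} : Finset V) := by
      rw [hte]; ext w; simp
      constructor
      · rintro ⟨h | h | h | h, hne⟩ <;> tauto
      · rintro (rfl | rfl | rfl) <;> exact ⟨by tauto, by intro h; subst h; tauto⟩
    rw [this]; exact e1

lemma apex_edges {E : Set (Finset V)} {s : Finset V} {p q : V}
    (h : IsK4m E s p) (hq : q ∈ s) (hpq : p ≠ q) :
    ∃ b c : V, b ≠ c ∧ b ≠ p ∧ b ≠ q ∧ c ≠ p ∧ c ≠ q ∧
      ({p, q, b} : Finset V) ∈ E ∧ ({p, q, c} : Finset V) ∈ E ∧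
      ({p, b, c} : Finset V) ∈ E := by
  obtain ⟨hs4, hp, hall⟩ := h
  have hsub : ({p, q} : Finset V) ⊆ s := by
    intro w hw; simp at hw; rcases hw with rfl | rfl <;> assumption
  have h2 : (s \ {p, q}).card = 2 := by
    rw [Finset.card_sdiff_of_subset hsub, hs4, Finset.card_pair hpq]
  obtain ⟨b, c, hbc, hbc2⟩ := Finset.card_eq_two.mp h2
  have hb : b ∈ s \ ({p, q} : Finset V) := by rw [hbc2]; simp
  have hc : c ∈ s \ ({p, q} : Finset V) := by rw [hbc2]; simp
  simp only [Finset.mem_sdiff, Finset.mem_insert, Finset.mem_singleton] at hb hc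
  push_neg at hb hc
  have sub1 : ({p, q, b} : Finset V) ⊆ s := by
    intro w hw; simp at hw
    rcases hw with rfl | rfl | rfl
    exacts [hp, hq, hb.1]
  have sub2 : ({p, q, c} : Finset V) ⊆ s := by
    intro w hw; simp at hw
    rcases hw with rfl | rfl | rfl
    exacts [hp, hq, hc.1]
  have sub3 : ({p, b, c} : Finset V) ⊆ s := by
    intro w hw; simp at hw
    rcases hw with rfl | rfl | rfl
    exacts [hp, hb.1, hc.1]
  exact ⟨b, c, hbc, hb.2.1, hb.2.2, hc.2.1, hc.2.2,
    hall _ sub1 (triple_card hpq (Ne.symm hb.2.1) (Ne.symm hb.2.2)) (by simp),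
    hall _ sub2 (triple_card hpq (Ne.symm hc.2.1) (Ne.symm hc.2.2)) (by simp),
    hall _ sub3 (triple_card (Ne.symm hb.2.1) (Ne.symm hc.2.1) hbc) (by simp)⟩

lemma base_edges {E : Set (Finset V)} {s : Finset V} {a u v : V}
    (h : IsK4m E s a) (hu : u ∈ s) (hv : v ∈ s) (hau : a ≠ u) (hav : a ≠ v)
    (huv : u ≠ v) :
    ∃ d : V, d ≠ a ∧ d ≠ u ∧ d ≠ v ∧ ({a, u, v} : Finset V) ∈ E ∧
      ({a, u, d} : Finset V) ∈ E ∧ ({a, v, d} : Finset V) ∈ E := by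
  obtain ⟨hs4, ha, hall⟩ := h
  have hsub : ({a, u, v} : Finset V) ⊆ s := by
    intro w hw; simp at hw; rcases hw with rfl | rfl | rfl <;> assumption
  have h1 : (s \ {a, u, v}).card = 1 := by
    rw [Finset.card_sdiff_of_subset hsub, hs4, triple_card hau hav huv]
  obtain ⟨d, hd⟩ := Finset.card_eq_one.mp h1
  have hdm : d ∈ s \ ({a, u, v} : Finset V) := by rw [hd]; simp
  simp only [Finset.mem_sdiff, Finset.mem_insert, Finset.mem_singleton] at hdm
  push_neg at hdm
  have sub2 : ({a, u, d} : Finset V) ⊆ s := by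
    intro w hw; simp at hw
    rcases hw with rfl | rfl | rfl
    exacts [ha, hu, hdm.1]
  have sub3 : ({a, v, d} : Finset V) ⊆ s := by
    intro w hw; simp at hw
    rcases hw with rfl | rfl | rfl
    exacts [ha, hv, hdm.1]
  exact ⟨d, hdm.2.1, hdm.2.2.1, hdm.2.2.2,
    hall _ hsub (triple_card hau hav huv) (by simp),
    hall _ sub2 (triple_card hau (Ne.symm hdm.2.1) (Ne.symm hdm.2.2.1)) (by simp),
    hall _ sub3 (triple_card hav (Ne.symm hdm.2.1) (Ne.symm hdm.2.2.2)) (by simp)⟩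

lemma c10_of {E : Set (Finset V)} {u v b c a d : V}
    (e1 : ({u, v, b} : Finset V) ∈ E) (e2 : ({u, v, c} : Finset V) ∈ E)
    (e3 : ({u, b, c} : Finset V) ∈ E) (e4 : ({a, u, v} : Finset V) ∈ E)
    (e5 : ({a, u, d} : Finset V) ∈ E) (e6 : ({a, v, d} : Finset V) ∈ E) :
    ∃ w : ZMod 10 → V, ∀ i : ZMod 10,
      ({w i, w (i + 1), w (i + 2)} : Finset V) ∈ E := by
  refine ⟨(![u, v, a, u, d, a, v, u, b, c] : Fin 10 → V), fun i => ?_⟩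
  fin_cases i
  · exact (show ({u,v,a}:Finset V) = {a,u,v} by ext w; simp; tauto) ▸ e4
  · exact (show ({v,a,u}:Finset V) = {a,u,v} by ext w; simp; tauto) ▸ e4
  · exact e5
  · exact (show ({u,d,a}:Finset V) = {a,u,d} by ext w; simp; tauto) ▸ e5
  · exact (show ({d,a,v}:Finset V) = {a,v,d} by ext w; simp; tauto) ▸ e6
  · exact (show ({a,v,u}:Finset V) = {a,u,v} by ext w; simp; tauto) ▸ e4
  · exact (show ({v,u,b}:Finset V) = {u,v,b} by ext w; simp; tauto) ▸ e1
  · exact e3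
  · exact (show ({b,c,u}:Finset V) = {u,b,c} by ext w; simp; tauto) ▸ e3
  · exact (show ({c,u,v}:Finset V) = {u,v,c} by ext w; simp; tauto) ▸ e2

lemma pigeon3 {V : Type} [Fintype V] (A B C : Set V)
    (h : (Fintype.card V : ℝ) < A.ncard + B.ncard + C.ncard) :
    ∃ z, (z ∈ A ∧ z ∈ B) ∨ (z ∈ A ∧ z ∈ C) ∨ (z ∈ B ∧ z ∈ C) := by
  by_contra hco
  push_neg at hco
  have hAB : Disjoint A B := Set.disjoint_left.mpr fun z ha hb => ((hco z).1 ha) hb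
  have hAC : Disjoint A C := Set.disjoint_left.mpr fun z ha hb => ((hco z).2.1 ha) hb
  have hBC : Disjoint B C := Set.disjoint_left.mpr fun z ha hb => ((hco z).2.2 ha) hb
  have hU : (A ∪ B ∪ C).ncard = A.ncard + B.ncard + C.ncard := by
    rw [Set.ncard_union_eq (Set.disjoint_union_left.mpr ⟨hAC, hBC⟩)
      ((A.toFinite).union (B.toFinite)) (C.toFinite),
      Set.ncard_union_eq hAB (A.toFinite) (B.toFinite)]
  have hle : (A ∪ B ∪ C).ncard ≤ Fintype.card V := by
    have := Set.ncard_le_ncard (Set.subset_univ (A ∪ B ∪ C)) Set.finite_univ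
    rwa [Set.ncard_univ, Nat.card_eq_fintype_card] at this
  rw [hU] at hle
  have : (A.ncard : ℝ) + B.ncard + C.ncard ≤ (Fintype.card V : ℝ) := by
    exact_mod_cast hle
  linarith

end Aux

/-- For every `ε > 0` there is `n₀` such that in every 3-uniform
hypergraph on `n ≥ n₀` vertices with `δ₂(H) ≥ (1/3 + ε)n` containing no homomorphic
image of the tight cycle `C₁₀`, every pair of distinct vertices is an apex pair or a
base pair, but not both. -/
theorem stmt12 (ε : ℝ) (hε : 0 < ε) :
    ∃ n₀ : ℕ, ∀ (V : Type) [Fintype V] [DecidableEq V] (E : Set (Finset V)),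
      n₀ ≤ Fintype.card V →
      (∀ e ∈ E, e.card = 3) →
      (∀ u v : V, u ≠ v →
        (1 / 3 + ε) * (Fintype.card V : ℝ) ≤
          (({w | ({u, v, w} : Finset V) ∈ E} : Set V).ncard : ℝ)) →
      (¬ ∃ w : ZMod 10 → V, ∀ i : ZMod 10,
        ({w i, w (i + 1), w (i + 2)} : Finset V) ∈ E) →
      ∀ u v : V, u ≠ v →
        (ApexPair E u v ∨ BasePair E u v) ∧
        ¬ (ApexPair E u v ∧ BasePair E u v) := by
  refine ⟨1, fun V _ _ E hn h3 hdeg hC10 u v huv => ?_⟩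
  have hn1 : (1 : ℝ) ≤ (Fintype.card V : ℝ) := by exact_mod_cast hn
  constructor
  · -- existence
    have hA := hdeg u v huv
    have hAne : ({w | ({u, v, w} : Finset V) ∈ E} : Set V).Nonempty := by
      rw [Set.nonempty_iff_ne_empty]
      intro h
      rw [h] at hA
      simp at hA
      nlinarith
    obtain ⟨w, hw⟩ := hAne
    obtain ⟨hwu, hwv⟩ := ne_of_edge h3 huv hw
    have hB := hdeg u w (Ne.symm hwu)
    have hC := hdeg v w (Ne.symm hwv)
    obtain ⟨z, hz⟩ := pigeon3 {w' | ({u, v, w'} : Finset V) ∈ E}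
      {w' | ({u, w, w'} : Finset V) ∈ E} {w' | ({v, w, w'} : Finset V) ∈ E}
      (by nlinarith)
    rcases hz with ⟨hzA, hzB⟩ | ⟨hzA, hzC⟩ | ⟨hzB, hzC⟩
    · obtain ⟨hzu, hzv⟩ := ne_of_edge h3 huv hzA
      obtain ⟨_, hzw⟩ := ne_of_edge h3 (Ne.symm hwu) hzB
      exact Or.inl ⟨{u, v, w, z}, by simp, by simp,
        Or.inl (isK4m_mk E u v w z huv (Ne.symm hwu) (Ne.symm hzu) (Ne.symm hwv)
          (Ne.symm hzv) (Ne.symm hzw) hw hzA hzB)⟩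
    · obtain ⟨hzu, hzv⟩ := ne_of_edge h3 huv hzA
      obtain ⟨_, hzw⟩ := ne_of_edge h3 (Ne.symm hwv) hzC
      exact Or.inl ⟨{v, u, w, z}, by simp, by simp,
        Or.inr (isK4m_mk E v u w z (Ne.symm huv) (Ne.symm hwv) (Ne.symm hzv)
          (Ne.symm hwu) (Ne.symm hzu) (Ne.symm hzw) (perm_mem hw) (perm_mem hzA) hzC)⟩
    · obtain ⟨hzu, hzw⟩ := ne_of_edge h3 (Ne.symm hwu) hzB
      obtain ⟨hzv, _⟩ := ne_of_edge h3 (Ne.symm hwv) hzC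
      exact Or.inr ⟨{w, u, v, z}, w, by simp, by simp, hwu, hwv,
        isK4m_mk E w u v z hwu hwv (Ne.symm hzw) huv
          (Ne.symm hzu) (Ne.symm hzv) (rot_mem hw) (perm_mem hzB) (perm_mem hzC)⟩
  · -- exclusivity
    rintro ⟨⟨s, hus, hvs, hk⟩, ⟨s', aa, hus', hvs', hau, hav, hk'⟩⟩
    obtain ⟨d, hda, hdu, hdv, f4, f5, f6⟩ :=
      base_edges hk' hus' hvs' hau hav huv
    rcases hk with hk | hk
    · obtain ⟨b, c, hbc, hbu, hbv, hcu, hcv, e1, e2, e3⟩ := apex_edges hk hvs huv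
      exact hC10 (c10_of e1 e2 e3 f4 f5 f6)
    · obtain ⟨b, c, hbc, hbv, hbu, hcv, hcu, e1, e2, e3⟩ :=
        apex_edges hk hus (Ne.symm huv)
      exact hC10 (c10_of e1 e2 e3 (perm23_mem f4) f6 f5)
end

section
/- Let H be a C₁₀-free 3-uniform hypergraph on n ≥ n₀ vertices with δ₂(H) ≥ (1/3+ε)n, and let D be the digraph on V(H) with arc (u,v) whenever there is a copy of K₄⁻ containing u and v with v as apex. Then D contains no directed cycle of length 2, i.e., (u,v) and (v,u) are never both arcs. -/
/-- Arc `(u,v)` of the auxiliary digraph `D`: some copy of `K₄⁻` contains `u` and `v`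
with `v` as its apex. -/
def Arc {V : Type*} [DecidableEq V] (E : Set (Finset V)) (u v : V) : Prop :=
  ∃ s : Finset V, u ∈ s ∧ v ∈ s ∧ IsK4m E s v

lemma card3_aux {V : Type} [DecidableEq V] {x y z : V} (hxy : x ≠ y) (hxz : x ≠ z)
    (hyz : y ≠ z) : ({x, y, z} : Finset V).card = 3 :=
  Finset.card_eq_three.mpr ⟨x, y, z, hxy, hxz, hyz, rfl⟩

/-- From a `K₄⁻` containing distinct `u, v` with apex `v`, extract the other
two vertices. -/
lemma k4m_extract {V : Type} [DecidableEq V] {E : Set (Finset V)} {s : Finset V}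
    {u v : V} (hu : u ∈ s) (hv : v ∈ s) (huv : u ≠ v) (hk : IsK4m E s v) :
    ∃ a b : V, a ≠ b ∧ a ≠ u ∧ a ≠ v ∧ b ≠ u ∧ b ≠ v ∧
      (∀ t ⊆ s, t.card = 3 → v ∈ t → t ∈ E) ∧ a ∈ s ∧ b ∈ s := by
  obtain ⟨hcard, -, hprop⟩ := hk
  have hsub : ({u, v} : Finset V) ⊆ s := by
    intro x hx; simp only [Finset.mem_insert, Finset.mem_singleton] at hx
    rcases hx with rfl | rfl <;> assumption
  have hc2 : ({u, v} : Finset V).card = 2 := Finset.card_pair huv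
  have hsd : (s \ {u, v}).card = 2 := by
    rw [Finset.card_sdiff_of_subset hsub, hcard, hc2]
  obtain ⟨a, b, hab, hset⟩ := Finset.card_eq_two.mp hsd
  have ha : a ∈ s \ ({u, v} : Finset V) := by rw [hset]; simp
  have hb : b ∈ s \ ({u, v} : Finset V) := by rw [hset]; simp
  simp only [Finset.mem_sdiff, Finset.mem_insert, Finset.mem_singleton, not_or] at ha hb
  exact ⟨a, b, hab, ha.2.1, ha.2.2, hb.2.1, hb.2.2, hprop, ha.1, hb.1⟩

/-- For every `ε > 0` there is `n₀` such that in every `C₁₀`-free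
3-uniform hypergraph on `n ≥ n₀` vertices with `δ₂(H) ≥ (1/3 + ε)n`, the apex digraph
`D` contains no directed cycle of length 2: `(u,v)` and `(v,u)` are never both arcs. -/
theorem stmt13 (ε : ℝ) (hε : 0 < ε) :
    ∃ n₀ : ℕ, ∀ (V : Type) [Fintype V] [DecidableEq V] (E : Set (Finset V)),
      n₀ ≤ Fintype.card V →
      (∀ e ∈ E, e.card = 3) →
      (∀ u v : V, u ≠ v →
        (1 / 3 + ε) * (Fintype.card V : ℝ) ≤
          (({w | ({u, v, w} : Finset V) ∈ E} : Set V).ncard : ℝ)) →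
      (¬ ∃ w : ZMod 10 → V, ∀ i : ZMod 10,
        ({w i, w (i + 1), w (i + 2)} : Finset V) ∈ E) →
      ∀ u v : V, u ≠ v → ¬ (Arc E u v ∧ Arc E v u) := by
  refine ⟨0, fun V _ _ E _ _ _ hC10 u v huv ⟨h1, h2⟩ => hC10 ?_⟩
  obtain ⟨s₁, hu1, hv1, hk1⟩ := h1
  obtain ⟨s₂, hv2, hu2, hk2⟩ := h2
  -- from the K₄⁻ with apex v: extra vertices a, b
  obtain ⟨a, b, hab, hau, hav, hbu, hbv, H1, has, hbs⟩ :=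
    k4m_extract hu1 hv1 huv hk1
  -- from the K₄⁻ with apex u: extra vertices c, d
  obtain ⟨c, d, hcd, hcv, hcu, hdv, hdu, H2, hcs, hds⟩ :=
    k4m_extract hv2 hu2 huv.symm hk2
  have hvu : v ≠ u := huv.symm
  -- the ten triple-edges of the walk a v b u v c u d v u
  have sub1 : ∀ {x y z : V}, x ∈ s₁ → y ∈ s₁ → z ∈ s₁ →
      ({x, y, z} : Finset V) ⊆ s₁ := by
    intro x y z hx hy hz t ht
    simp only [Finset.mem_insert, Finset.mem_singleton] at ht
    rcases ht with rfl | rfl | rfl <;> assumption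
  have sub2 : ∀ {x y z : V}, x ∈ s₂ → y ∈ s₂ → z ∈ s₂ →
      ({x, y, z} : Finset V) ⊆ s₂ := by
    intro x y z hx hy hz t ht
    simp only [Finset.mem_insert, Finset.mem_singleton] at ht
    rcases ht with rfl | rfl | rfl <;> assumption
  have e0 : ({a, v, b} : Finset V) ∈ E :=
    H1 _ (sub1 has hv1 hbs) (card3_aux hav hab (Ne.symm hbv)) (by simp)
  have e1 : ({v, b, u} : Finset V) ∈ E :=
    H1 _ (sub1 hv1 hbs hu1) (card3_aux (Ne.symm hbv) hvu hbu) (by simp)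
  have e2 : ({b, u, v} : Finset V) ∈ E :=
    H1 _ (sub1 hbs hu1 hv1) (card3_aux hbu hbv huv) (by simp)
  have e3 : ({u, v, c} : Finset V) ∈ E :=
    H2 _ (sub2 hu2 hv2 hcs) (card3_aux huv (Ne.symm hcu) (Ne.symm hcv)) (by simp)
  have e4 : ({v, c, u} : Finset V) ∈ E :=
    H2 _ (sub2 hv2 hcs hu2) (card3_aux (Ne.symm hcv) hvu hcu) (by simp)
  have e5 : ({c, u, d} : Finset V) ∈ E :=
    H2 _ (sub2 hcs hu2 hds) (card3_aux hcu hcd (Ne.symm hdu)) (by simp)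
  have e6 : ({u, d, v} : Finset V) ∈ E :=
    H2 _ (sub2 hu2 hds hv2) (card3_aux (Ne.symm hdu) huv hdv) (by simp)
  have e7 : ({d, v, u} : Finset V) ∈ E :=
    H2 _ (sub2 hds hv2 hu2) (card3_aux hdv hdu hvu) (by simp)
  have e8 : ({v, u, a} : Finset V) ∈ E :=
    H1 _ (sub1 hv1 hu1 has) (card3_aux hvu (Ne.symm hav) (Ne.symm hau)) (by simp)
  have e9 : ({u, a, v} : Finset V) ∈ E :=
    H1 _ (sub1 hu1 has hv1) (card3_aux (Ne.symm hau) huv hav) (by simp)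
  refine ⟨fun j : ZMod 10 => ![a, v, b, u, v, c, u, d, v, u] j, fun i => ?_⟩
  fin_cases i <;>
    · simp only [show ∀ x y : Fin 10, ((x + y : ZMod 10) : Fin 10) = x + y from
        fun _ _ => rfl]
      norm_num [Matrix.cons_val_zero, Matrix.cons_val_one, Matrix.head_cons,
        Matrix.cons_val_succ, Fin.isValue]
      assumption
end

section
/- Let H be a C₁₀-free 3-uniform hypergraph on n vertices with δ₂(H) ≥ (1/3+ε)n (n large), D the apex digraph and B the set of base pairs as defined. If a vertex v satisfies d_B(v) > 0 (v lies in some base pair), then d⁺_D(v) ≥ (1/3+ε)n. -/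
namespace Stmt14Aux

variable {V : Type*} [DecidableEq V]

lemma distinct3 {E : Set (Finset V)} (hE : ∀ e ∈ E, e.card = 3) {a b c : V}
    (h : ({a, b, c} : Finset V) ∈ E) : a ≠ b ∧ a ≠ c ∧ b ≠ c := by
  have h3 := hE _ h
  refine ⟨?_, ?_, ?_⟩ <;> rintro rfl
  · have : ({a, a, c} : Finset V) = {a, c} := by simp
    rw [this] at h3
    have := Finset.card_insert_le a ({c} : Finset V)
    simp at this; omega
  · have : ({a, b, a} : Finset V) = {a, b} := by
      ext y; simp; tauto
    rw [this] at h3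
    have := Finset.card_insert_le a ({b} : Finset V)
    simp at this; omega
  · have : ({a, b, b} : Finset V) = {a, b} := by simp
    rw [this] at h3
    have := Finset.card_insert_le a ({b} : Finset V)
    simp at this; omega

lemma quad_card {a b c d : V} (hab : a ≠ b) (hac : a ≠ c) (had : a ≠ d)
    (hbc : b ≠ c) (hbd : b ≠ d) (hcd : c ≠ d) :
    ({a, b, c, d} : Finset V).card = 4 := by
  rw [Finset.card_insert_of_notMem (by simp [hab, hac, had]),
    Finset.card_insert_of_notMem (by simp [hbc, hbd]),
    Finset.card_insert_of_notMem (by simp [hcd]), Finset.card_singleton]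

lemma tri_card {a b c : V} (hab : a ≠ b) (hac : a ≠ c) (hbc : b ≠ c) :
    ({a, b, c} : Finset V).card = 3 := by
  rw [Finset.card_insert_of_notMem (by simp [hab, hac]),
    Finset.card_insert_of_notMem (by simp [hbc]), Finset.card_singleton]

lemma subset3 {a b c d : V} (hab : a ≠ b) (hac : a ≠ c) (had : a ≠ d)
    (hbc : b ≠ c) (hbd : b ≠ d) (hcd : c ≠ d) {t : Finset V}
    (ht : t ⊆ {a, b, c, d}) (h3 : t.card = 3) (hat : a ∈ t) :
    t = {a, b, c} ∨ t = {a, b, d} ∨ t = {a, c, d} := by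
  by_cases hb : b ∈ t <;> by_cases hc : c ∈ t <;> by_cases hd : d ∈ t
  · -- all in: contradiction
    exfalso
    have hsub : ({a, b, c, d} : Finset V) ⊆ t := by
      intro x hx; simp at hx; rcases hx with rfl | rfl | rfl | rfl <;> assumption
    have := Finset.card_le_card hsub
    rw [quad_card hab hac had hbc hbd hcd] at this; omega
  · left
    have hsub : ({a, b, c} : Finset V) ⊆ t := by
      intro x hx; simp at hx; rcases hx with rfl | rfl | rfl <;> assumption
    exact (Finset.eq_of_subset_of_card_le hsub (by rw [tri_card hab hac hbc, h3])).symm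
  · right; left
    have hsub : ({a, b, d} : Finset V) ⊆ t := by
      intro x hx; simp at hx; rcases hx with rfl | rfl | rfl <;> assumption
    exact (Finset.eq_of_subset_of_card_le hsub (by rw [tri_card hab had hbd, h3])).symm
  · exfalso
    have hsub : t ⊆ ({a, b} : Finset V) := by
      intro x hx
      have h' := ht hx
      simp at h' ⊢
      rcases h' with rfl | rfl | rfl | rfl
      · left; rfl
      · right; rfl
      · exact absurd hx hc
      · exact absurd hx hd
    have h1 := Finset.card_le_card hsub
    have h2 := Finset.card_insert_le a ({b} : Finset V)
    simp at h2; omega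
  · right; right
    have hsub : ({a, c, d} : Finset V) ⊆ t := by
      intro x hx; simp at hx; rcases hx with rfl | rfl | rfl <;> assumption
    exact (Finset.eq_of_subset_of_card_le hsub (by rw [tri_card hac had hcd, h3])).symm
  · exfalso
    have hsub : t ⊆ ({a, c} : Finset V) := by
      intro x hx
      have h' := ht hx
      simp at h' ⊢
      rcases h' with rfl | rfl | rfl | rfl
      · left; rfl
      · exact absurd hx hb
      · right; rfl
      · exact absurd hx hd
    have h1 := Finset.card_le_card hsub
    have h2 := Finset.card_insert_le a ({c} : Finset V)
    simp at h2; omega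
  · exfalso
    have hsub : t ⊆ ({a, d} : Finset V) := by
      intro x hx
      have h' := ht hx
      simp at h' ⊢
      rcases h' with rfl | rfl | rfl | rfl
      · left; rfl
      · exact absurd hx hb
      · exact absurd hx hc
      · right; rfl
    have h1 := Finset.card_le_card hsub
    have h2 := Finset.card_insert_le a ({d} : Finset V)
    simp at h2; omega
  · exfalso
    have hsub : t ⊆ ({a} : Finset V) := by
      intro x hx
      have h' := ht hx
      simp at h' ⊢
      rcases h' with rfl | rfl | rfl | rfl
      · rfl
      · exact absurd hx hb
      · exact absurd hx hc
      · exact absurd hx hd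
    have h1 := Finset.card_le_card hsub
    simp at h1; omega

lemma build {E : Set (Finset V)} {a b c d : V} (hab : a ≠ b) (hac : a ≠ c)
    (had : a ≠ d) (hbc : b ≠ c) (hbd : b ≠ d) (hcd : c ≠ d)
    (h1 : ({a, b, c} : Finset V) ∈ E) (h2 : ({a, b, d} : Finset V) ∈ E)
    (h3 : ({a, c, d} : Finset V) ∈ E) :
    IsK4m E ({a, b, c, d} : Finset V) a := by
  refine ⟨quad_card hab hac had hbc hbd hcd, by simp, ?_⟩
  intro t ht htc hat
  rcases subset3 hab hac had hbc hbd hcd ht htc hat with rfl | rfl | rfl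
  · exact h1
  · exact h2
  · exact h3

end Stmt14Aux

/-- In a `C₁₀`-free 3-uniform hypergraph on `n` vertices with
`δ₂(H) ≥ (1/3 + ε)n` — assuming, as established in the previous claims, that no pair
is both an apex pair and a base pair and that the apex digraph `D` has no 2-cycles —
every vertex `v` lying in some base pair has out-degree `d⁺_D(v) ≥ (1/3 + ε)n`. -/
theorem stmt14 {V : Type*} [Fintype V] [DecidableEq V] (E : Set (Finset V)) (n : ℕ)
    (hn : Fintype.card V = n) (hE : ∀ e ∈ E, e.card = 3) (ε : ℝ) (hε : 0 < ε)
    (hδ : ∀ u v : V, u ≠ v →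
      (1 / 3 + ε) * n ≤ (({w | ({u, v, w} : Finset V) ∈ E} : Set V).ncard : ℝ))
    (hfree : ¬ ∃ w : ZMod 10 → V, ∀ i : ZMod 10,
      ({w i, w (i + 1), w (i + 2)} : Finset V) ∈ E)
    (hxor : ∀ u v : V, u ≠ v → ¬ (ApexPair E u v ∧ BasePair E u v))
    (h2cyc : ∀ u v : V, u ≠ v → ¬ (Arc E u v ∧ Arc E v u))
    (v : V) (hv : ∃ u : V, u ≠ v ∧ BasePair E u v) :
    (1 / 3 + ε) * n ≤ (({w | w ≠ v ∧ Arc E v w} : Set V).ncard : ℝ) := by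
  classical
  obtain ⟨u, huv, hBP⟩ := hv
  have hn1 : 1 ≤ n := by
    rw [← hn]; exact Fintype.card_pos_iff.mpr ⟨v⟩
  -- every codegree neighbor of {u,v} is an out-neighbor of v
  have hsub : {w | ({u, v, w} : Finset V) ∈ E} ⊆ {w | w ≠ v ∧ Arc E v w} := by
    intro w hw
    simp only [Set.mem_setOf_eq] at hw ⊢
    obtain ⟨huv', huw, hvw⟩ := Stmt14Aux.distinct3 hE hw
    -- counting: some x lies in two of the three codegree neighborhoods
    have key : (∃ x, ({u, v, x} : Finset V) ∈ E ∧ ({v, w, x} : Finset V) ∈ E) ∨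
        (∃ x, ({u, v, x} : Finset V) ∈ E ∧ ({u, w, x} : Finset V) ∈ E) ∨
        (∃ x, ({v, w, x} : Finset V) ∈ E ∧ ({u, w, x} : Finset V) ∈ E) := by
      by_contra hcon
      push_neg at hcon
      obtain ⟨c1, c2, c3⟩ := hcon
      set A : Set V := {x | ({u, v, x} : Finset V) ∈ E} with hA
      set B : Set V := {x | ({v, w, x} : Finset V) ∈ E} with hB
      set C : Set V := {x | ({u, w, x} : Finset V) ∈ E} with hC
      have dAB : Disjoint A B := Set.disjoint_left.mpr fun x hx hx' => c1 x hx hx'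
      have dAC : Disjoint A C := Set.disjoint_left.mpr fun x hx hx' => c2 x hx hx'
      have dBC : Disjoint B C := Set.disjoint_left.mpr fun x hx hx' => c3 x hx hx'
      have hcard : (A ∪ B ∪ C).ncard = A.ncard + B.ncard + C.ncard := by
        rw [Set.ncard_union_eq (by
              exact Set.disjoint_union_left.mpr ⟨dAC, dBC⟩) ((A ∪ B).toFinite)
            (C.toFinite),
          Set.ncard_union_eq dAB A.toFinite B.toFinite]
      have hle : (A ∪ B ∪ C).ncard ≤ n := by
        have h := Set.ncard_le_ncard (Set.subset_univ (A ∪ B ∪ C)) (Set.toFinite _)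
        rwa [Set.ncard_univ, Nat.card_eq_fintype_card, hn] at h
      have bA := hδ u v huv'
      have bB := hδ v w hvw
      have bC := hδ u w huw
      rw [← hA] at bA; rw [← hB] at bB; rw [← hC] at bC
      have : ((A.ncard + B.ncard + C.ncard : ℕ) : ℝ) ≤ (n : ℝ) := by
        rw [← hcard]; exact_mod_cast hle
      push_cast at this
      have hnr : (1 : ℝ) ≤ (n : ℝ) := by exact_mod_cast hn1
      nlinarith
    rcases key with ⟨x, hx1, hx2⟩ | ⟨x, hx1, hx2⟩ | ⟨x, hx1, hx2⟩
    · -- x ∈ N(u,v) ∩ N(v,w): apex v, contradicts base pair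
      exfalso
      obtain ⟨_, hux, hvx⟩ := Stmt14Aux.distinct3 hE hx1
      obtain ⟨_, _, hwx⟩ := Stmt14Aux.distinct3 hE hx2
      have e1 : ({v, u, w} : Finset V) ∈ E := by
        have : ({v, u, w} : Finset V) = {u, v, w} := by ext y; simp; tauto
        rw [this]; exact hw
      have e2 : ({v, u, x} : Finset V) ∈ E := by
        have : ({v, u, x} : Finset V) = {u, v, x} := by ext y; simp; tauto
        rw [this]; exact hx1
      have hk : IsK4m E ({v, u, w, x} : Finset V) v :=
        Stmt14Aux.build (Ne.symm huv') hvw hvx huw hux hwx e1 e2 hx2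
      exact hxor u v huv' ⟨⟨_, by simp, by simp, Or.inr hk⟩, hBP⟩
    · -- x ∈ N(u,v) ∩ N(u,w): apex u, contradicts base pair
      exfalso
      obtain ⟨_, hux, hvx⟩ := Stmt14Aux.distinct3 hE hx1
      obtain ⟨_, _, hwx⟩ := Stmt14Aux.distinct3 hE hx2
      have hk : IsK4m E ({u, v, w, x} : Finset V) u :=
        Stmt14Aux.build huv' huw hux hvw hvx hwx hw hx1 hx2
      exact hxor u v huv' ⟨⟨_, by simp, by simp, Or.inl hk⟩, hBP⟩
    · -- x ∈ N(v,w) ∩ N(u,w): apex w, gives the arc v → w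
      obtain ⟨_, hvx, hwx⟩ := Stmt14Aux.distinct3 hE hx1
      obtain ⟨_, hux, _⟩ := Stmt14Aux.distinct3 hE hx2
      have e1 : ({w, u, v} : Finset V) ∈ E := by
        have : ({w, u, v} : Finset V) = {u, v, w} := by ext y; simp; tauto
        rw [this]; exact hw
      have e2 : ({w, u, x} : Finset V) ∈ E := by
        have : ({w, u, x} : Finset V) = {u, w, x} := by ext y; simp; tauto
        rw [this]; exact hx2
      have e3 : ({w, v, x} : Finset V) ∈ E := by
        have : ({w, v, x} : Finset V) = {v, w, x} := by ext y; simp; tauto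
        rw [this]; exact hx1
      have hk : IsK4m E ({w, u, v, x} : Finset V) w :=
        Stmt14Aux.build (Ne.symm huw) (Ne.symm hvw) hwx huv' hux hvx e1 e2 e3
      exact ⟨Ne.symm hvw, ⟨_, by simp, by simp, hk⟩⟩
  calc (1 / 3 + ε) * n ≤ (({w | ({u, v, w} : Finset V) ∈ E} : Set V).ncard : ℝ) :=
        hδ u v huv
    _ ≤ _ := by
        exact_mod_cast Set.ncard_le_ncard hsub (Set.toFinite _)
end

section
/- Under the same setup (C₁₀-free H with δ₂(H) ≥ (1/3+ε)n, apex digraph D, base-pair graph B, every pair apex xor base, D without 2-cycles): if d⁺_D(v) > 0 then d_B(v) ≥ (1/3+ε)n, and if d⁻_D(v) > 0 then d⁻_D(v) ≥ (1/3+ε)n. -/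
lemma swap12 {V : Type*} [DecidableEq V] (a b c : V) :
    ({a, b, c} : Finset V) = {b, a, c} := by
  ext t; simp only [Finset.mem_insert, Finset.mem_singleton]; tauto

lemma rot3 {V : Type*} [DecidableEq V] (a b c : V) :
    ({a, b, c} : Finset V) = {c, a, b} := by
  ext t; simp only [Finset.mem_insert, Finset.mem_singleton]; tauto

lemma edge_ne {V : Type*} [DecidableEq V] (E : Set (Finset V))
    (hE : ∀ e ∈ E, e.card = 3) {a b c : V} (h : ({a, b, c} : Finset V) ∈ E) :
    a ≠ b ∧ a ≠ c ∧ b ≠ c := by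
  refine ⟨?_, ?_, ?_⟩ <;> rintro rfl <;> have h3 := hE _ h <;>
    have h4 : ∀ x y : V, ({x, y} : Finset V).card ≤ 2 :=
      fun x y => (Finset.card_insert_le _ _).trans (by simp)
  · have hs : ({a, a, c} : Finset V) ⊆ {a, c} := by intro x hx; simp at hx ⊢; tauto
    have := (Finset.card_le_card hs).trans (h4 a c); omega
  · have hs : ({a, b, a} : Finset V) ⊆ {a, b} := by intro x hx; simp at hx ⊢; tauto
    have := (Finset.card_le_card hs).trans (h4 a b); omega
  · have hs : ({a, b, b} : Finset V) ⊆ {a, b} := by intro x hx; simp at hx ⊢; tauto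
    have := (Finset.card_le_card hs).trans (h4 a b); omega

lemma mkK4 {V : Type*} [DecidableEq V] (E : Set (Finset V)) (a b c d : V)
    (hab : a ≠ b) (hac : a ≠ c) (had : a ≠ d) (hbc : b ≠ c) (hbd : b ≠ d) (hcd : c ≠ d)
    (h1 : ({a, b, c} : Finset V) ∈ E) (h2 : ({a, b, d} : Finset V) ∈ E)
    (h3 : ({a, c, d} : Finset V) ∈ E) :
    IsK4m E {a, b, c, d} a := by
  have hcard : ({a, b, c, d} : Finset V).card = 4 := by
    rw [Finset.card_insert_of_notMem (by simp [hab, hac, had]),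
      Finset.card_insert_of_notMem (by simp [hbc, hbd]),
      Finset.card_insert_of_notMem (by simp [hcd]), Finset.card_singleton]
  refine ⟨hcard, by simp, ?_⟩
  intro t hts htc hat
  have h5 : (({a, b, c, d} : Finset V) \ t).card = 1 := by
    rw [Finset.card_sdiff_of_subset hts, hcard, htc]
  obtain ⟨x, hx⟩ := Finset.card_eq_one.mp h5
  have hte : t = ({a, b, c, d} : Finset V) \ {x} := by
    rw [← hx, Finset.sdiff_sdiff_eq_self hts]
  have hxst : x ∈ ({a, b, c, d} : Finset V) \ t := by
    rw [hx]; exact Finset.mem_singleton_self x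
  have hxs := (Finset.mem_sdiff.mp hxst).1
  have hxt := (Finset.mem_sdiff.mp hxst).2
  have hxa : x ≠ a := fun h => hxt (h ▸ hat)
  simp only [Finset.mem_insert, Finset.mem_singleton] at hxs
  rcases hxs with rfl | rfl | rfl | rfl
  · exact absurd rfl hxa
  · have ht : t = ({a, c, d} : Finset V) := by
      rw [hte]; ext y
      simp only [Finset.mem_sdiff, Finset.mem_insert, Finset.mem_singleton]
      constructor
      · rintro ⟨h | h | h | h, hb⟩ <;> tauto
      · rintro (rfl | rfl | rfl)
        exacts [⟨Or.inl rfl, hab⟩, ⟨Or.inr (Or.inr (Or.inl rfl)), hbc.symm⟩,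
          ⟨Or.inr (Or.inr (Or.inr rfl)), hbd.symm⟩]
    rw [ht]; exact h3
  · have ht : t = ({a, b, d} : Finset V) := by
      rw [hte]; ext y
      simp only [Finset.mem_sdiff, Finset.mem_insert, Finset.mem_singleton]
      constructor
      · rintro ⟨h | h | h | h, hb⟩ <;> tauto
      · rintro (rfl | rfl | rfl)
        exacts [⟨Or.inl rfl, hac⟩, ⟨Or.inr (Or.inl rfl), hbc⟩,
          ⟨Or.inr (Or.inr (Or.inr rfl)), hcd.symm⟩]
    rw [ht]; exact h2
  · have ht : t = ({a, b, c} : Finset V) := by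
      rw [hte]; ext y
      simp only [Finset.mem_sdiff, Finset.mem_insert, Finset.mem_singleton]
      constructor
      · rintro ⟨h | h | h | h, hb⟩ <;> tauto
      · rintro (rfl | rfl | rfl)
        exacts [⟨Or.inl rfl, had⟩, ⟨Or.inr (Or.inl rfl), hbd⟩,
          ⟨Or.inr (Or.inr (Or.inl rfl)), hcd⟩]
    rw [ht]; exact h1

lemma three_disj {V : Type*} [Fintype V] (A B C : Set V)
    (hAB : Disjoint A B) (hAC : Disjoint A C) (hBC : Disjoint B C) :
    A.ncard + B.ncard + C.ncard ≤ Fintype.card V := by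
  have h1 : (A ∪ B).ncard = A.ncard + B.ncard :=
    Set.ncard_union_eq hAB (Set.toFinite _) (Set.toFinite _)
  have h2 : (A ∪ B ∪ C).ncard = (A ∪ B).ncard + C.ncard :=
    Set.ncard_union_eq (by rw [Set.disjoint_union_left]; exact ⟨hAC, hBC⟩)
      (Set.toFinite _) (Set.toFinite _)
  have h3 : (A ∪ B ∪ C).ncard ≤ Fintype.card V := by
    have h4 := Set.ncard_le_ncard (Set.subset_univ (A ∪ B ∪ C)) (Set.toFinite _)
    simpa [Set.ncard_univ, Nat.card_eq_fintype_card] using h4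
  omega

lemma three_contra {V : Type*} [Fintype V] (n : ℕ) (hn : Fintype.card V = n)
    (hpos : 0 < n) (ε : ℝ) (hε : 0 < ε) (A B C : Set V)
    (hA : (1 / 3 + ε) * n ≤ (A.ncard : ℝ)) (hB : (1 / 3 + ε) * n ≤ (B.ncard : ℝ))
    (hC : (1 / 3 + ε) * n ≤ (C.ncard : ℝ))
    (hAB : Disjoint A B) (hAC : Disjoint A C) (hBC : Disjoint B C) : False := by
  have hsum := three_disj A B C hAB hAC hBC
  rw [hn] at hsum
  have hsumR : (A.ncard : ℝ) + B.ncard + C.ncard ≤ (n : ℝ) := by exact_mod_cast hsum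
  have hnR : (1 : ℝ) ≤ (n : ℝ) := by exact_mod_cast hpos
  nlinarith

/-- Under the same setup as the previous claim (`C₁₀`-free `H` with
`δ₂(H) ≥ (1/3 + ε)n`, no pair both apex and base, no 2-cycles in `D`): if
`d⁺_D(v) > 0` then `d_B(v) ≥ (1/3 + ε)n`, and if `d⁻_D(v) > 0` then
`d⁻_D(v) ≥ (1/3 + ε)n`. -/
theorem stmt15 {V : Type*} [Fintype V] [DecidableEq V] (E : Set (Finset V)) (n : ℕ)
    (hn : Fintype.card V = n) (hE : ∀ e ∈ E, e.card = 3) (ε : ℝ) (hε : 0 < ε)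
    (hδ : ∀ u v : V, u ≠ v →
      (1 / 3 + ε) * n ≤ (({w | ({u, v, w} : Finset V) ∈ E} : Set V).ncard : ℝ))
    (hfree : ¬ ∃ w : ZMod 10 → V, ∀ i : ZMod 10,
      ({w i, w (i + 1), w (i + 2)} : Finset V) ∈ E)
    (hxor : ∀ u v : V, u ≠ v → ¬ (ApexPair E u v ∧ BasePair E u v))
    (h2cyc : ∀ u v : V, u ≠ v → ¬ (Arc E u v ∧ Arc E v u))
    (v : V) :
    ((∃ w : V, w ≠ v ∧ Arc E v w) →
      (1 / 3 + ε) * n ≤ (({u | u ≠ v ∧ BasePair E u v} : Set V).ncard : ℝ)) ∧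
    ((∃ u : V, u ≠ v ∧ Arc E u v) →
      (1 / 3 + ε) * n ≤ (({u | u ≠ v ∧ Arc E u v} : Set V).ncard : ℝ)) := by
  have hne : Nonempty V := ⟨v⟩
  have hpos : 0 < n := by rw [← hn]; exact Fintype.card_pos
  constructor
  · rintro ⟨w, hwv, s0, hvs0, hws0, hK⟩
    have hvw : v ≠ w := hwv.symm
    have hsub : {z | ({v, w, z} : Finset V) ∈ E} ⊆ {u | u ≠ v ∧ BasePair E u v} := by
      intro z hz
      simp only [Set.mem_setOf_eq] at hz ⊢
      obtain ⟨_, hvz, hwz⟩ := edge_ne E hE hz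
      refine ⟨hvz.symm, ?_⟩
      by_contra hB
      refine three_contra n hn hpos ε hε
        {z' | ({v, w, z'} : Finset V) ∈ E} {y | ({v, z, y} : Finset V) ∈ E}
        {y | ({w, z, y} : Finset V) ∈ E}
        (hδ v w hvw) (hδ v z hvz) (hδ w z hwz) ?_ ?_ ?_
      · rw [Set.disjoint_left]
        intro z' h1 h2
        simp only [Set.mem_setOf_eq] at h1 h2
        obtain ⟨_, hvz', hwz'⟩ := edge_ne E hE h1
        obtain ⟨_, _, hzz'⟩ := edge_ne E hE h2
        have hK4 : IsK4m E {v, w, z, z'} v :=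
          mkK4 E v w z z' hvw hvz hvz' hwz hwz' hzz' hz h1 h2
        exact h2cyc v w hvw
          ⟨⟨s0, hvs0, hws0, hK⟩, ⟨{v, w, z, z'}, by simp, by simp, hK4⟩⟩
      · rw [Set.disjoint_left]
        intro z' h1 h2
        simp only [Set.mem_setOf_eq] at h1 h2
        obtain ⟨_, hvz', hwz'⟩ := edge_ne E hE h1
        obtain ⟨_, _, hzz'⟩ := edge_ne E hE h2
        have hK4 : IsK4m E {w, v, z, z'} w :=
          mkK4 E w v z z' hvw.symm hwz hwz' hvz hvz' hzz'
            (by rwa [← swap12]) (by rwa [← swap12]) h2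
        exact hB ⟨{w, v, z, z'}, w, by simp, by simp, hwz, hvw.symm, hK4⟩
      · rw [Set.disjoint_left]
        intro y h1 h2
        simp only [Set.mem_setOf_eq] at h1 h2
        obtain ⟨_, hvy, hzy⟩ := edge_ne E hE h1
        obtain ⟨_, hwy, _⟩ := edge_ne E hE h2
        have hK4 : IsK4m E {z, v, w, y} z :=
          mkK4 E z v w y hvz.symm hwz.symm hzy hvw hvy hwy
            (by rwa [← rot3]) (by rwa [← swap12]) (by rwa [← swap12])
        exact hxor v w hvw
          ⟨⟨s0, hvs0, hws0, Or.inr hK⟩,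
            ⟨{z, v, w, y}, z, by simp, by simp, hvz.symm, hwz.symm, hK4⟩⟩
    calc (1 / 3 + ε) * n ≤ (({z | ({v, w, z} : Finset V) ∈ E} : Set V).ncard : ℝ) :=
          hδ v w hvw
      _ ≤ (({u | u ≠ v ∧ BasePair E u v} : Set V).ncard : ℝ) :=
          Nat.cast_le.mpr (Set.ncard_le_ncard hsub (Set.toFinite _))
  · rintro ⟨u, huv, s0, hus0, hvs0, hK⟩
    have hsub : {z | ({u, v, z} : Finset V) ∈ E} ⊆ {z | z ≠ v ∧ Arc E z v} := by
      intro z hz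
      simp only [Set.mem_setOf_eq] at hz ⊢
      obtain ⟨_, huz, hvz⟩ := edge_ne E hE hz
      refine ⟨hvz.symm, ?_⟩
      by_contra hA
      refine three_contra n hn hpos ε hε
        {z' | ({u, v, z'} : Finset V) ∈ E} {y | ({v, z, y} : Finset V) ∈ E}
        {y | ({u, z, y} : Finset V) ∈ E}
        (hδ u v huv) (hδ v z hvz) (hδ u z huz) ?_ ?_ ?_
      · rw [Set.disjoint_left]
        intro z' h1 h2
        simp only [Set.mem_setOf_eq] at h1 h2
        obtain ⟨_, huz', hvz'⟩ := edge_ne E hE h1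
        obtain ⟨_, _, hzz'⟩ := edge_ne E hE h2
        have hK4 : IsK4m E {v, u, z, z'} v :=
          mkK4 E v u z z' huv.symm hvz hvz' huz huz' hzz'
            (by rwa [← swap12]) (by rwa [← swap12]) h2
        exact hA ⟨{v, u, z, z'}, by simp, by simp, hK4⟩
      · rw [Set.disjoint_left]
        intro z' h1 h2
        simp only [Set.mem_setOf_eq] at h1 h2
        obtain ⟨_, huz', hvz'⟩ := edge_ne E hE h1
        obtain ⟨_, _, hzz'⟩ := edge_ne E hE h2
        have hK4 : IsK4m E {u, v, z, z'} u :=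
          mkK4 E u v z z' huv huz huz' hvz hvz' hzz' hz h1 h2
        exact h2cyc u v huv
          ⟨⟨s0, hus0, hvs0, hK⟩, ⟨{u, v, z, z'}, by simp, by simp, hK4⟩⟩
      · rw [Set.disjoint_left]
        intro y h1 h2
        simp only [Set.mem_setOf_eq] at h1 h2
        obtain ⟨_, hvy, hzy⟩ := edge_ne E hE h1
        obtain ⟨_, huy, _⟩ := edge_ne E hE h2
        have hK4 : IsK4m E {z, u, v, y} z :=
          mkK4 E z u v y huz.symm hvz.symm hzy huv huy hvy
            (by rwa [← rot3]) (by rwa [← swap12]) (by rwa [← swap12])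
        exact hxor u v huv
          ⟨⟨s0, hus0, hvs0, Or.inr hK⟩,
            ⟨{z, u, v, y}, z, by simp, by simp, huz.symm, hvz.symm, hK4⟩⟩
    calc (1 / 3 + ε) * n ≤ (({z | ({u, v, z} : Finset V) ∈ E} : Set V).ncard : ℝ) :=
          hδ u v huv
      _ ≤ (({u | u ≠ v ∧ Arc E u v} : Set V).ncard : ℝ) :=
          Nat.cast_le.mpr (Set.ncard_le_ncard hsub (Set.toFinite _))
end
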